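/- Let ε be a real number with 0 ≤ ε ≤ 1/6 and define f_ε : ℕ → [0,1] by f_ε(0) = 1, f_ε(1) = 1−ε, f_ε(2) = 2/3, and f_ε(d) = min{3ε, 2/(d+1)} for d ≥ 3. Then f_ε is an extremal lower bound for α_𝓛: there is no function g : ℕ → [0,1] with g not identically 0 such that α_𝓛(G) ≥ ∑_{v ∈ V(G)} (f_ε + g)(d(v)) holds for every graph G. -/

import Mathlib

/-- A graph is a linear forest if it is acyclic and every vertex has degree at most 2
(equivalently, every connected component is a path; a single vertex counts as a path). -/
def IsLinearForest {α : Type*} (H : SimpleGraph α) : Prop :=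
  H.IsAcyclic ∧ ∀ v, (H.neighborSet v).ncard ≤ 2

/-- The lower-bound function f_ε for linear forests. -/
noncomputable def fL (ε : ℝ) (d : ℕ) : ℝ :=
  if d = 0 then 1
  else if d = 1 then 1 - ε
  else if d = 2 then 2/3
  else min (3 * ε) (2 / ((d : ℝ) + 1))

open SimpleGraph Finset

lemma triangle_not_acyclic {α : Type*} {H : SimpleGraph α} {a b c : α}
    (hab : H.Adj a b) (hbc : H.Adj b c) (hca : H.Adj c a) : ¬ H.IsAcyclic := by
  intro hA
  exact hA (Walk.cons hab (Walk.cons hbc (Walk.cons hca Walk.nil))) (by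
    simp [Walk.isCycle_def, Walk.isTrail_def, hab.ne, hbc.ne, hca.ne, hca.ne',
      hab.ne', hbc.ne', Sym2.eq, Sym2.rel_iff])

lemma complete_linear_forest {V : Type} (S : Finset V)
    (h : IsLinearForest ((⊤ : SimpleGraph V).induce (S : Set V))) : S.card ≤ 2 := by
  by_contra hc
  push_neg at hc
  obtain ⟨a, b, c, ha, hb, hcS, hab, hac, hbc⟩ := Finset.two_lt_card_iff.mp hc
  refine triangle_not_acyclic (H := (⊤ : SimpleGraph V).induce (S : Set V))
    (a := ⟨a, ha⟩) (b := ⟨b, hb⟩) (c := ⟨c, hcS⟩) ?_ ?_ ?_ h.1 <;>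
    simp [SimpleGraph.top_adj, Subtype.ext_iff, hab, hac, hbc, hbc.symm, Ne.symm hab, Ne.symm hac]


def CL (m : ℕ) : SimpleGraph (Fin m × Fin 4) where
  Adj x y := (x.2 = 0 ∧ y.2 = 0 ∧ x.1 ≠ y.1) ∨
    (x.1 = y.1 ∧ ((x.2 = 0 ∧ y.2 ≠ 0) ∨ (y.2 = 0 ∧ x.2 ≠ 0)))
  symm := by
    constructor
    rintro x y (⟨h1, h2, h3⟩ | ⟨h1, h2⟩)
    · exact Or.inl ⟨h2, h1, h3.symm⟩
    · exact Or.inr ⟨h1.symm, h2.symm⟩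
  loopless := by constructor; rintro x (⟨_, _, h⟩ | ⟨_, ⟨h1, h2⟩ | ⟨h1, h2⟩⟩) <;> simp_all

instance CL.adjDecidable (m : ℕ) : DecidableRel (CL m).Adj := fun x y =>
  inferInstanceAs (Decidable ((x.2 = 0 ∧ y.2 = 0 ∧ x.1 ≠ y.1) ∨
    (x.1 = y.1 ∧ ((x.2 = 0 ∧ y.2 ≠ 0) ∨ (y.2 = 0 ∧ x.2 ≠ 0)))))

lemma CL_adj {m : ℕ} {x y : Fin m × Fin 4} : (CL m).Adj x y ↔
    (x.2 = 0 ∧ y.2 = 0 ∧ x.1 ≠ y.1) ∨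
    (x.1 = y.1 ∧ ((x.2 = 0 ∧ y.2 ≠ 0) ∨ (y.2 = 0 ∧ x.2 ≠ 0))) := Iff.rfl

lemma CL_degree_zero {m : ℕ} (i : Fin m) : (CL m).degree (i, 0) = m + 2 := by
  have h : (CL m).neighborFinset (i, 0) = (univ.erase i) ×ˢ {(0 : Fin 4)} ∪ {i} ×ˢ (univ.erase (0 : Fin 4)) := by
    ext ⟨j, b⟩
    simp only [mem_neighborFinset, CL_adj, mem_union, mem_product, mem_erase, mem_singleton,
      mem_univ, and_true, true_and]
    tauto
  have hm : 1 ≤ m := (i : Fin m).pos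
  rw [SimpleGraph.degree, h, card_union_of_disjoint, card_product, card_product,
    card_erase_of_mem (mem_univ i), card_erase_of_mem (mem_univ (0 : Fin 4)),
    card_univ, card_univ, Fintype.card_fin, Fintype.card_fin, card_singleton, card_singleton]
  · omega
  · rw [Finset.disjoint_left]
    rintro ⟨j, b⟩ hx hy
    simp only [mem_product, mem_erase, mem_singleton] at hx hy
    exact hy.2.1 hx.2

lemma CL_degree_leaf {m : ℕ} (i : Fin m) (b : Fin 4) (hb : b ≠ 0) :
    (CL m).degree (i, b) = 1 := by
  have h : (CL m).neighborFinset (i, b) = {(i, (0 : Fin 4))} := by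
    ext ⟨j, c⟩
    simp only [mem_neighborFinset, CL_adj, mem_singleton, Prod.mk.injEq]
    tauto
  rw [SimpleGraph.degree, h, card_singleton]

lemma CL_linear_forest {m : ℕ} (S : Finset (Fin m × Fin 4))
    (h : IsLinearForest ((CL m).induce (S : Set (Fin m × Fin 4)))) : S.card ≤ 3 * m := by
  classical
  set C := S.filter (fun v => v.2 = 0) with hCdef
  set L := S.filter (fun v => ¬ v.2 = 0) with hLdef
  have hc2 : C.card ≤ 2 := by
    by_contra hc
    push_neg at hc
    obtain ⟨a, b, c, ha, hb, hcC, hab, hac, hbc⟩ := Finset.two_lt_card_iff.mp hc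
    rw [hCdef, mem_filter] at ha hb hcC
    have h1 : a.1 ≠ b.1 := fun e => hab (Prod.ext e (ha.2.trans hb.2.symm))
    have h2 : b.1 ≠ c.1 := fun e => hbc (Prod.ext e (hb.2.trans hcC.2.symm))
    have h3 : c.1 ≠ a.1 := fun e => hac (Prod.ext (e.symm : a.1 = c.1) (ha.2.trans hcC.2.symm))
    exact triangle_not_acyclic (H := (CL m).induce (S : Set _))
      (a := ⟨a, ha.1⟩) (b := ⟨b, hb.1⟩) (c := ⟨c, hcC.1⟩)
      (Or.inl ⟨ha.2, hb.2, h1⟩) (Or.inl ⟨hb.2, hcC.2, h2⟩) (Or.inl ⟨hcC.2, ha.2, h3⟩) h.1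
  have hCmem : ∀ i : Fin m, (i, (0:Fin 4)) ∈ S →
      (L.filter (fun v => v.1 = i)).card + C.card ≤ 3 := by
    intro i hi
    have hiC : (i, (0:Fin 4)) ∈ C := by rw [hCdef, mem_filter]; exact ⟨hi, rfl⟩
    have hc1 : 1 ≤ C.card := Finset.card_pos.mpr ⟨_, hiC⟩
    set T := L.filter (fun v => v.1 = i) ∪ C.erase (i, 0) with hTdef
    have hdisj : Disjoint (L.filter (fun v => v.1 = i)) (C.erase (i, 0)) := by
      rw [Finset.disjoint_left]
      intro v hv hv'
      rw [mem_filter, hLdef, mem_filter] at hv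
      rw [mem_erase, hCdef, mem_filter] at hv'
      exact hv.1.2 hv'.2.2
    have hTcard : T.card = (L.filter (fun v => v.1 = i)).card + (C.card - 1) := by
      rw [hTdef, card_union_of_disjoint hdisj, card_erase_of_mem hiC]
    have hmem : ∀ v ∈ T, v ∈ S ∧ (CL m).Adj (i, 0) v := by
      intro v hv
      rw [hTdef, mem_union] at hv
      rcases hv with hv | hv
      · rw [mem_filter, hLdef, mem_filter] at hv
        exact ⟨hv.1.1, Or.inr ⟨hv.2.symm, Or.inl ⟨rfl, hv.1.2⟩⟩⟩
      · rw [mem_erase, hCdef, mem_filter] at hv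
        have hne : i ≠ v.1 := by
          intro e
          exact hv.1 (show v = (i, (0:Fin 4)) from Prod.ext e.symm hv.2.2)
        exact ⟨hv.2.1, Or.inl ⟨rfl, hv.2.2, hne⟩⟩
    have hi' : ((i, (0:Fin 4)) : Fin m × Fin 4) ∈ (S : Set (Fin m × Fin 4)) := hi
    have hsub : (↑T : Set (Fin m × Fin 4)) ⊆
        Subtype.val '' (((CL m).induce (S : Set _)).neighborSet ⟨(i,0), hi'⟩) := by
      intro v hv
      rw [Finset.mem_coe] at hv
      obtain ⟨hvS, hadj⟩ := hmem v hv
      exact ⟨⟨v, hvS⟩, hadj, rfl⟩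
    have hle := Set.ncard_le_ncard hsub (Set.toFinite _)
    rw [Set.ncard_coe_finset, Set.ncard_image_of_injective _ Subtype.val_injective] at hle
    have h2 := h.2 ⟨(i,0), hi'⟩
    omega
  have hI3 : ∀ i : Fin m, (L.filter (fun v => v.1 = i)).card ≤ 3 := by
    intro i
    have hsub : L.filter (fun v => v.1 = i) ⊆ {i} ×ˢ (univ.erase (0:Fin 4)) := by
      intro v hv
      rw [mem_filter, hLdef, mem_filter] at hv
      rw [mem_product, mem_singleton, mem_erase]
      exact ⟨hv.2, hv.1.2, mem_univ _⟩
    have := card_le_card hsub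
    rwa [card_product, card_singleton, card_erase_of_mem (mem_univ _), card_univ,
      Fintype.card_fin, one_mul] at this
  set I := C.image Prod.fst with hIdef
  have hIcard : I.card = C.card := by
    apply card_image_of_injOn
    intro x hx y hy e
    simp only [Finset.mem_coe, hCdef, mem_filter] at hx hy
    exact Prod.ext e (hx.2.trans hy.2.symm)
  have hIle : I.card ≤ m := le_trans (card_le_univ I) (by simp)
  have hLsum : L.card = ∑ i : Fin m, (L.filter (fun v => v.1 = i)).card :=
    card_eq_sum_card_fiberwise (fun v _ => mem_univ v.1)
  have hterm : ∀ i : Fin m, (L.filter (fun v => v.1 = i)).card ≤ if i ∈ I then 3 - C.card else 3 := by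
    intro i
    by_cases hiI : i ∈ I
    · rw [if_pos hiI]
      rw [hIdef, mem_image] at hiI
      obtain ⟨v, hvC, hvi⟩ := hiI
      rw [hCdef, mem_filter] at hvC
      have hv : v = (i, (0:Fin 4)) := Prod.ext hvi hvC.2
      have := hCmem i (hv ▸ hvC.1)
      omega
    · rw [if_neg hiI]; exact hI3 i
  have hsum2 : ∑ i : Fin m, (if i ∈ I then 3 - C.card else 3) =
      I.card * (3 - C.card) + (m - I.card) * 3 := by
    rw [Finset.sum_ite, Finset.sum_const, Finset.sum_const, Finset.filter_mem_eq_inter, univ_inter]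
    have hcompl : (univ.filter (fun i => i ∉ I)) = Iᶜ := by ext x; simp
    rw [hcompl, card_compl, Fintype.card_fin, smul_eq_mul, smul_eq_mul]
  have hScard : S.card = C.card + L.card := by
    rw [hCdef, hLdef]; exact (card_filter_add_card_filter_not _).symm
  have hLle : L.card ≤ I.card * (3 - C.card) + (m - I.card) * 3 := by
    rw [hLsum, ← hsum2]
    exact Finset.sum_le_sum (fun i _ => hterm i)
  have hcases : C.card = 0 ∨ C.card = 1 ∨ C.card = 2 := by omega
  rcases hcases with hc | hc | hc <;> rw [hc] at hLle hIcard <;> rw [hIcard] at hLle hIle <;> omega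

lemma complete_case (ε : ℝ) {g : ℕ → ℝ} {d : ℕ} (hgd : 0 < g d)
    (hfd : fL ε d = 2 / ((d:ℝ) + 1))
    (hb : ∀ (V : Type) [Fintype V] [DecidableEq V] (G : SimpleGraph V) [DecidableRel G.Adj],
        ∃ S : Finset V, IsLinearForest (G.induce (S : Set V)) ∧
          ∑ v, (fL ε (G.degree v) + g (G.degree v)) ≤ (S.card : ℝ)) : False := by
  obtain ⟨S, hS, hle⟩ := hb (Fin (d+1)) ⊤
  have h2 : S.card ≤ 2 := complete_linear_forest S hS
  have hdeg : ∀ v : Fin (d+1), (⊤ : SimpleGraph (Fin (d+1))).degree v = d := by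
    intro v; rw [SimpleGraph.complete_graph_degree]; simp
  rw [Finset.sum_congr rfl (fun v _ => by rw [hdeg v])] at hle
  rw [Finset.sum_const, card_univ, Fintype.card_fin, nsmul_eq_mul, hfd] at hle
  have hcast : (S.card : ℝ) ≤ 2 := by exact_mod_cast h2
  have hpos : (0:ℝ) < (d:ℝ) + 1 := by positivity
  push_cast at hle
  have hexp : ((d:ℝ)+1) * (2/((d:ℝ)+1) + g d) = 2 + ((d:ℝ)+1) * g d := by
    field_simp
  rw [hexp] at hle
  nlinarith [mul_pos hpos hgd]

lemma CL_case (ε : ℝ) {g : ℕ → ℝ} {m : ℕ} (hm : 1 ≤ m)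
    (hf : fL ε (m+2) = 3 * ε)
    (hpos : 0 < g (m+2) + 3 * g 1)
    (hb : ∀ (V : Type) [Fintype V] [DecidableEq V] (G : SimpleGraph V) [DecidableRel G.Adj],
        ∃ S : Finset V, IsLinearForest (G.induce (S : Set V)) ∧
          ∑ v, (fL ε (G.degree v) + g (G.degree v)) ≤ (S.card : ℝ)) : False := by
  obtain ⟨S, hS, hle⟩ := hb (Fin m × Fin 4) (CL m)
  have h3m : S.card ≤ 3 * m := CL_linear_forest S hS
  have hf1 : fL ε 1 = 1 - ε := by simp [fL]
  have hsum : ∑ v : Fin m × Fin 4, (fL ε ((CL m).degree v) + g ((CL m).degree v))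
      = m * ((fL ε (m+2) + g (m+2)) + 3 * (fL ε 1 + g 1)) := by
    rw [Fintype.sum_prod_type]
    have hrow : ∀ i : Fin m, (∑ b : Fin 4, (fL ε ((CL m).degree (i,b)) + g ((CL m).degree (i,b))))
        = (fL ε (m+2) + g (m+2)) + 3 * (fL ε 1 + g 1) := by
      intro i
      rw [Fin.sum_univ_four, CL_degree_zero i, CL_degree_leaf i 1 (by decide),
        CL_degree_leaf i 2 (by decide), CL_degree_leaf i 3 (by decide)]
      ring
    rw [Finset.sum_congr rfl (fun i _ => hrow i), Finset.sum_const, card_univ,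
      Fintype.card_fin, nsmul_eq_mul]
  rw [hsum, hf, hf1] at hle
  have hm1 : (1:ℝ) ≤ (m:ℝ) := by exact_mod_cast hm
  have hc : (S.card : ℝ) ≤ 3 * m := by exact_mod_cast h3m
  have hexp : (m:ℝ) * ((3 * ε + g (m+2)) + 3 * ((1 - ε) + g 1))
      = 3 * m + m * (g (m+2) + 3 * g 1) := by ring
  rw [hexp] at hle
  have := mul_le_mul_of_nonneg_right hm1 hpos.le
  linarith

/-- For 0 ≤ ε ≤ 1/6, the lower bound f_ε for induced linear forests is extremal:
no nonzero g : ℕ → [0,1] can be added to f_ε while keeping a valid lower bound. -/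
theorem stmt4 (ε : ℝ) (hε0 : 0 ≤ ε) (hε1 : ε ≤ 1/6) :
    ¬ ∃ g : ℕ → ℝ, (∀ d, 0 ≤ g d ∧ g d ≤ 1) ∧ (∃ d, g d ≠ 0) ∧
      (∀ (V : Type) [Fintype V] [DecidableEq V] (G : SimpleGraph V) [DecidableRel G.Adj],
        ∃ S : Finset V, IsLinearForest (G.induce (S : Set V)) ∧
          ∑ v, (fL ε (G.degree v) + g (G.degree v)) ≤ (S.card : ℝ)) := by
  rintro ⟨g, hg01, ⟨d, hd⟩, hb⟩
  have hgd : 0 < g d := lt_of_le_of_ne (hg01 d).1 (Ne.symm hd)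
  match d, hd, hgd with
  | 0, hd, hgd =>
    obtain ⟨S, _, hle⟩ := hb (Fin 1) ⊥
    have hS1 : (S.card : ℝ) ≤ 1 := by
      exact_mod_cast (card_le_univ S).trans (by simp)
    simp only [SimpleGraph.bot_degree] at hle
    rw [Finset.sum_const, card_univ, Fintype.card_fin, one_nsmul] at hle
    have hf0 : fL ε 0 = 1 := by simp [fL]
    rw [hf0] at hle
    linarith
  | 1, hd, hgd =>
    refine CL_case ε (m := 1) le_rfl ?_ ?_ hb
    · have h34 : ((3:ℕ):ℝ) + 1 = 4 := by norm_num
      rw [fL]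
      rw [if_neg (by omega), if_neg (by omega), if_neg (by omega), h34]
      exact min_eq_left (by norm_num; linarith)
    · have := (hg01 3).1
      linarith
  | 2, hd, hgd =>
    refine complete_case ε hgd ?_ hb
    rw [fL]; norm_num
  | (n+3), hd, hgd =>
    by_cases hcmp : 3 * ε ≤ 2 / (((n+3:ℕ):ℝ) + 1)
    · refine CL_case ε (m := n+1) (by omega) ?_ ?_ hb
      · rw [fL]
        rw [if_neg (by omega), if_neg (by omega), if_neg (by omega)]
        exact min_eq_left hcmp
      · have := (hg01 1).1
        have : 0 < g (n+3) := hgd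
        linarith [(hg01 1).1]
    · refine complete_case ε hgd ?_ hb
      rw [fL]
      rw [if_neg (by omega), if_neg (by omega), if_neg (by omega)]
      exact min_eq_right (le_of_not_ge hcmp)
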